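/- arXiv:2501.07754 — 4 statements merged into one kernel-verified Lean document; each statement's English description precedes it below -/
import Mathlib

section
/- Let P and Q be probability measures on a measurable space with densities p and q with respect to a common σ-finite measure μ, and let f : ℝ → ℝ be convex with f(1) = 0. Then for any bounded measurable function h whose range lies in the domain of the Fenchel conjugate f*, the f-divergence D_f(P‖Q) = ∫ f(p/q) q dμ satisfies D_f(P‖Q) ≥ ∫ h dP − ∫ f*(h) dQ, where f*(t) = sup_u (t·u − f(u)). -/
open MeasureTheory

/-- Variational lower bound on the f-divergence: for densities `p, q` of probability
measures w.r.t. a σ-finite measure `μ`, a convex `f` with `f 1 = 0`, and any bounded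
measurable `h` whose values lie in the domain of the Fenchel conjugate `f*`
(i.e. the defining supremum is finite/attained as a real supremum),
`∫ f(p/q) q dμ ≥ ∫ h p dμ - ∫ f*(h) q dμ`. -/
theorem f_divergence_variational_bound
    {Ω : Type*} [MeasurableSpace Ω] (μ : Measure Ω) [SigmaFinite μ]
    (p q : Ω → ℝ) (hp : ∀ x, 0 ≤ p x) (hq : ∀ᵐ x ∂μ, 0 < q x)
    (hpmeas : Measurable p) (hqmeas : Measurable q)
    (hP : ∫ x, p x ∂μ = 1) (hQ : ∫ x, q x ∂μ = 1)
    (f : ℝ → ℝ) (hf : ConvexOn ℝ Set.univ f) (hf1 : f 1 = 0)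
    (h : Ω → ℝ) (hmeas : Measurable h) (hbdd : ∃ M : ℝ, ∀ x, |h x| ≤ M)
    (hdom : ∀ x, BddAbove (Set.range fun u : ℝ => h x * u - f u))
    (hint1 : Integrable (fun x => f (p x / q x) * q x) μ)
    (hint2 : Integrable (fun x => h x * p x) μ)
    (hint3 : Integrable (fun x => (⨆ u : ℝ, h x * u - f u) * q x) μ) :
    ∫ x, h x * p x ∂μ - ∫ x, (⨆ u : ℝ, h x * u - f u) * q x ∂μ
      ≤ ∫ x, f (p x / q x) * q x ∂μ := by
  rw [← integral_sub hint2 hint3]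
  refine integral_mono_ae (hint2.sub hint3) hint1 ?_
  filter_upwards [hq] with x hqx
  have key : h x * (p x / q x) - f (p x / q x) ≤ ⨆ u : ℝ, h x * u - f u :=
    le_ciSup (hdom x) (p x / q x)
  have := mul_le_mul_of_nonneg_right key hqx.le
  have hpq : p x / q x * q x = p x := div_mul_cancel₀ _ hqx.ne'
  rw [sub_mul, mul_assoc, hpq] at this
  linarith
end

section
/- For probability measures P and Q on a finite type with probability mass functions p and q (q strictly positive), and any function h with values in ℝ, the KL divergence satisfies ∑_x p(x) log(p(x)/q(x)) ≥ ∑_x p(x) h(x) − ∑_x q(x) exp(h(x) − 1). -/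
/-- Donsker–Varadhan-type lower bound for the KL divergence on a finite type:
`∑ p log(p/q) ≥ ∑ p h - ∑ q exp(h - 1)`. -/
theorem kl_variational_bound {α : Type*} [Fintype α]
    (p q : α → ℝ) (hp : ∀ x, 0 < p x) (hq : ∀ x, 0 < q x)
    (hp1 : ∑ x, p x = 1) (hq1 : ∑ x, q x = 1) (h : α → ℝ) :
    ∑ x, p x * h x - ∑ x, q x * Real.exp (h x - 1)
      ≤ ∑ x, p x * Real.log (p x / q x) := by
  rw [← Finset.sum_sub_distrib]
  apply Finset.sum_le_sum
  intro x _
  have hr : 0 < p x / q x := div_pos (hp x) (hq x)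
  have key : (h x - 1 - Real.log (p x / q x)) + 1
      ≤ Real.exp (h x - 1 - Real.log (p x / q x)) := Real.add_one_le_exp _
  have hexp : Real.exp (h x - 1 - Real.log (p x / q x))
      = Real.exp (h x - 1) * (q x / p x) := by
    rw [Real.exp_sub, Real.exp_log hr]
    field_simp
  rw [hexp] at key
  have := mul_le_mul_of_nonneg_left key (hp x).le
  have h2 : p x * (Real.exp (h x - 1) * (q x / p x)) = q x * Real.exp (h x - 1) := by
    rw [mul_comm (Real.exp (h x - 1)) (q x / p x), ← mul_assoc,
      mul_div_cancel₀ _ (hp x).ne', mul_comm]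
  rw [h2] at this
  nlinarith [this]
end

section
/- Let p₁, …, p_m be probability mass functions on a finite type α with uniform priors. Set h₀(x) = −1 for all x, and let h₁, …, h_{m−1} : α → ℝ satisfy −1 < h_i(x) ≤ 0 for all x. Defining Ε_λ = ∑_x p_λ(x)·(∑_{i=λ}^{m−1} h_i(x) − h_{λ−1}(x)), the Bayes error ε = 1 − ∑_x max_i p_i(x)/m satisfies ε ≤ 1 − (1/m) ∑_{λ=1}^m Ε_λ. -/
lemma keyV (q a : ℕ → ℝ) (M : ℝ) : ∀ n : ℕ,
    (∀ l ∈ Finset.Icc 1 (n+1), 0 ≤ q l ∧ q l ≤ M) →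
    (∀ i ∈ Finset.Icc 1 n, 0 ≤ a i ∧ a i ≤ 1) →
    (q 1 + ∑ i ∈ Finset.Icc 1 n, a i * (q (i+1) - ∑ l ∈ Finset.Icc 1 i, q l) ≤ M ∧
     q 1 + ∑ i ∈ Finset.Icc 1 n, a i * (q (i+1) - ∑ l ∈ Finset.Icc 1 i, q l)
       ≤ ∑ l ∈ Finset.Icc 1 (n+1), q l) := by
  intro n
  induction n with
  | zero =>
    intro hq _
    simp only [Finset.Icc_self, Finset.sum_singleton, zero_add]
    have := hq 1 (by simp)
    constructor
    · simpa using this.2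
    · simp
  | succ n ih =>
    intro hq ha
    have hq' : ∀ l ∈ Finset.Icc 1 (n+1), 0 ≤ q l ∧ q l ≤ M := by
      intro l hl
      exact hq l (Finset.mem_Icc.2 ⟨(Finset.mem_Icc.1 hl).1, (Finset.mem_Icc.1 hl).2.trans (by omega)⟩)
    have ha' : ∀ i ∈ Finset.Icc 1 n, 0 ≤ a i ∧ a i ≤ 1 := by
      intro i hi
      exact ha i (Finset.mem_Icc.2 ⟨(Finset.mem_Icc.1 hi).1, (Finset.mem_Icc.1 hi).2.trans (by omega)⟩)
    obtain ⟨ih1, ih2⟩ := ih hq' ha'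
    have hsum : ∑ i ∈ Finset.Icc 1 (n+1), a i * (q (i+1) - ∑ l ∈ Finset.Icc 1 i, q l)
        = (∑ i ∈ Finset.Icc 1 n, a i * (q (i+1) - ∑ l ∈ Finset.Icc 1 i, q l))
          + a (n+1) * (q (n+2) - ∑ l ∈ Finset.Icc 1 (n+1), q l) := by
      rw [← Finset.sum_Icc_succ_top (by omega : 1 ≤ n+1)]
    have hPsucc : ∑ l ∈ Finset.Icc 1 (n+2), q l
        = (∑ l ∈ Finset.Icc 1 (n+1), q l) + q (n+2) := by
      rw [← Finset.sum_Icc_succ_top (by omega : 1 ≤ n+2)]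
    have han1 := ha (n+1) (by simp)
    have hqn2 := hq (n+2) (by simp)
    have hP : (0:ℝ) ≤ ∑ l ∈ Finset.Icc 1 (n+1), q l :=
      Finset.sum_nonneg fun l hl => (hq' l hl).1
    rcases le_or_gt (q (n+2)) (∑ l ∈ Finset.Icc 1 (n+1), q l) with hc | hc
    · have hterm : a (n+1) * (q (n+2) - ∑ l ∈ Finset.Icc 1 (n+1), q l) ≤ 0 :=
        mul_nonpos_of_nonneg_of_nonpos han1.1 (by linarith)
      constructor
      · rw [hsum]; linarith
      · rw [hsum, hPsucc]; linarith [hqn2.1]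
    · have hterm : a (n+1) * (q (n+2) - ∑ l ∈ Finset.Icc 1 (n+1), q l)
          ≤ q (n+2) - ∑ l ∈ Finset.Icc 1 (n+1), q l := by
        nlinarith [han1.2, han1.1]
      constructor
      · rw [hsum]; linarith [hqn2.2]
      · rw [hsum, hPsucc]; linarith [hP]

lemma pointwiseT (n : ℕ) (q h : ℕ → ℝ) (hh0 : h 0 = -1) :
    ∑ lam ∈ Finset.Icc 1 (n+1), q lam * ((∑ i ∈ Finset.Icc lam n, h i) - h (lam-1))
      = q 1 + ∑ i ∈ Finset.Icc 1 n, (-h i) * (q (i+1) - ∑ l ∈ Finset.Icc 1 i, q l) := by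
  have e1 : ∑ lam ∈ Finset.Icc 1 (n+1), q lam * ∑ i ∈ Finset.Icc lam n, h i
      = ∑ i ∈ Finset.Icc 1 n, (∑ l ∈ Finset.Icc 1 i, q l) * h i := by
    simp_rw [Finset.mul_sum]
    rw [Finset.sum_comm' (t' := Finset.Icc 1 n) (s' := fun i => Finset.Icc 1 i)
      (by intro x y; simp only [Finset.mem_Icc]; omega)]
    simp_rw [← Finset.sum_mul]
  have e2 : ∑ lam ∈ Finset.Icc 1 (n+1), q lam * h (lam-1)
      = -q 1 + ∑ i ∈ Finset.Icc 1 n, q (i+1) * h i := by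
    have hins : Finset.Icc 1 (n+1) = insert 1 (Finset.Icc 2 (n+1)) := by
      ext x; simp only [Finset.mem_insert, Finset.mem_Icc]; omega
    rw [hins, Finset.sum_insert (by simp)]
    have : (Finset.Icc 2 (n+1)) = (Finset.Icc 1 n).map (addLeftEmbedding 1) := by
      rw [Finset.map_add_left_Icc, Nat.add_comm 1 n]
    rw [this, Finset.sum_map]
    simp [hh0, addLeftEmbedding, add_comm, mul_comm]
  simp only [mul_sub, Finset.sum_sub_distrib]
  rw [e1, e2]
  have key : (∑ x ∈ Finset.Icc 1 n, -h x * q (x+1)) - ∑ x ∈ Finset.Icc 1 n, -h x * ∑ l ∈ Finset.Icc 1 x, q l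
      = (∑ x ∈ Finset.Icc 1 n, (∑ l ∈ Finset.Icc 1 x, q l) * h x) - ∑ x ∈ Finset.Icc 1 n, q (x+1) * h x := by
    rw [← Finset.sum_sub_distrib, ← Finset.sum_sub_distrib]
    exact Finset.sum_congr rfl fun x _ => by ring
  linarith [key]

/-- Multi-class upper bound on the Bayes error (uniform prior): with `h₀ ≡ -1`
and `h₁, …, h_{m-1}` taking values in `(-1, 0]`, and
`Ε_λ = ∑ₓ p_λ(x)(∑_{i=λ}^{m-1} h_i(x) - h_{λ-1}(x))`, the Bayes error
`ε = 1 - ∑ₓ max_{1 ≤ i ≤ m} p_i(x)/m` satisfies `ε ≤ 1 - (1/m) ∑_{λ=1}^m Ε_λ`. -/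
theorem multiclass_bayes_error_bound {α : Type*} [Fintype α]
    (m : ℕ) (hm : 2 ≤ m) (p : ℕ → α → ℝ)
    (hp : ∀ i ∈ Finset.Icc 1 m, (∀ x, 0 < p i x) ∧ ∑ x, p i x = 1)
    (h : ℕ → α → ℝ) (hh0 : ∀ x, h 0 x = -1)
    (hh : ∀ i ∈ Finset.Icc 1 (m - 1), ∀ x, -1 < h i x ∧ h i x ≤ 0)
    (μmax : α → ℝ)
    (hμ : ∀ x, IsGreatest ((fun i => p i x / m) '' Set.Icc 1 m) (μmax x)) :
    1 - ∑ x, μmax x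
      ≤ 1 - (1 / m) * ∑ lam ∈ Finset.Icc 1 m,
          ∑ x, p lam x * ((∑ i ∈ Finset.Icc lam (m - 1), h i x) - h (lam - 1) x) := by
  have hm0 : (0:ℝ) < m := by exact_mod_cast (by omega : 0 < m)
  obtain ⟨n, rfl⟩ : ∃ n, m = n + 1 := ⟨m - 1, by omega⟩
  have hn : n + 1 - 1 = n := by omega
  rw [hn] at hh ⊢
  -- pointwise bound
  have hpt : ∀ x : α, ∑ lam ∈ Finset.Icc 1 (n+1),
      p lam x * ((∑ i ∈ Finset.Icc lam n, h i x) - h (lam-1) x) ≤ (n+1 : ℝ) * μmax x := by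
    intro x
    have hq : ∀ l ∈ Finset.Icc 1 (n+1), 0 ≤ p l x ∧ p l x ≤ (n+1 : ℝ) * μmax x := by
      intro l hl
      refine ⟨((hp l hl).1 x).le, ?_⟩
      have hmem : p l x / ((n:ℝ)+1) ∈ ((fun i => p i x / ((n+1:ℕ):ℝ)) '' Set.Icc 1 (n+1)) := by
        refine ⟨l, ?_, by push_cast; ring_nf⟩
        simp only [Set.mem_Icc]
        exact Finset.mem_Icc.1 hl
      have hle := (hμ x).2 hmem
      rw [div_le_iff₀ (by positivity)] at hle
      calc p l x ≤ μmax x * ((n:ℝ)+1) := hle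
        _ = (n+1 : ℝ) * μmax x := by ring
    have ha : ∀ i ∈ Finset.Icc 1 n, 0 ≤ -h i x ∧ -h i x ≤ 1 := by
      intro i hi
      have := hh i hi x
      constructor <;> linarith [this.1, this.2]
    have := (keyV (fun l => p l x) (fun i => -h i x) ((n+1 : ℝ) * μmax x) n hq ha).1
    rw [pointwiseT n (fun l => p l x) (fun i => h i x) (hh0 x)]
    exact this
  have hsum : ∑ lam ∈ Finset.Icc 1 (n+1),
      ∑ x, p lam x * ((∑ i ∈ Finset.Icc lam n, h i x) - h (lam-1) x)
      ≤ ((n:ℝ)+1) * ∑ x, μmax x := by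
    rw [Finset.sum_comm, Finset.mul_sum]
    apply Finset.sum_le_sum
    intro x _
    have := hpt x
    push_cast at this ⊢
    linarith
  have hcast : ((n+1 : ℕ) : ℝ) = (n:ℝ) + 1 := by push_cast; ring
  rw [hcast]
  have h1 : (1 / ((n:ℝ)+1)) * ∑ lam ∈ Finset.Icc 1 (n+1),
      ∑ x, p lam x * ((∑ i ∈ Finset.Icc lam n, h i x) - h (lam-1) x)
      ≤ ∑ x, μmax x := by
    rw [div_mul_eq_mul_div, one_mul, div_le_iff₀ (by positivity)]
    calc _ ≤ ((n:ℝ)+1) * ∑ x, μmax x := hsum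
      _ = (∑ x, μmax x) * ((n:ℝ)+1) := by ring
  linarith
end

section
/- For any real-valued function h on a finite type α with −1 < h(x) ≤ 0, and probability mass functions p₁, p₂ with p₂ strictly positive, the variational objective ∑_x p₁(x)h(x) − ∑_x p₂(x)h(x) is at most D_{f_hng}(p₁‖p₂) = ∑_x max(0, 1 − p₁(x)/p₂(x))·p₂(x). -/
/-- For any `h` with values in `(-1, 0]`, the variational objective is bounded by
the hinge divergence: `∑ p₁ h - ∑ p₂ h ≤ ∑ max(0, 1 - p₁/p₂)·p₂`. -/
theorem variational_le_hinge_divergence {α : Type*} [Fintype α]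
    (p₁ p₂ : α → ℝ) (hp₁ : ∀ x, 0 ≤ p₁ x) (hp₂ : ∀ x, 0 < p₂ x)
    (h₁ : ∑ x, p₁ x = 1) (h₂ : ∑ x, p₂ x = 1)
    (h : α → ℝ) (hh : ∀ x, -1 < h x ∧ h x ≤ 0) :
    ∑ x, p₁ x * h x - ∑ x, p₂ x * h x ≤ ∑ x, max 0 (1 - p₁ x / p₂ x) * p₂ x := by
  rw [← Finset.sum_sub_distrib]
  apply Finset.sum_le_sum
  intro x _
  obtain ⟨ha, hb⟩ := hh x
  have hp2 := hp₂ x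
  have hp1 := hp₁ x
  rcases le_total (p₁ x) (p₂ x) with hle | hle
  · have : (0:ℝ) ≤ 1 - p₁ x / p₂ x := by
      rw [sub_nonneg, div_le_one hp2]; exact hle
    rw [max_eq_right this]
    have : (1 - p₁ x / p₂ x) * p₂ x = p₂ x - p₁ x := by field_simp
    rw [this]; nlinarith
  · have : 1 - p₁ x / p₂ x ≤ 0 := by
      rw [sub_nonpos, le_div_iff₀ hp2]; nlinarith
    rw [max_eq_left this]; nlinarith
end
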